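/- arXiv:1910.13972 — 5 statements merged into one kernel-verified Lean document; each statement's English description precedes it below -/
import Mathlib

section
/- Let m = m(n) be a sequence of positive integers with m(n) → ∞ and m(n)/n → 0 as n → ∞, and fix a constant γ' < 1. Let X_1, …, X_n be i.i.d. standard Gaussian random vectors in ℝ^m. Then the probability that the discrepancy D(X_1, …, X_n) is at least γ'·√(πn/2)·2^{-n/m} tends to 1 as n → ∞. -/
/-!
For a fixed signing `σ`, the vector `∑ σᵢ Xᵢ` has independent `N(0, n)` coordinates, and the
density of `N(0, n)` is at most `1 / √(2πn)`, so `‖∑ σᵢ Xᵢ‖_∞ < t` has probability at most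
`(2t / √(2πn))^m`. For `t = γ √(πn/2) 2^(-n/m)` this is `γ^m 2^(-n)`, and a union bound over the
`2^n` signings shows that the discrepancy falls below `t` with probability at most `γ^m → 0`.
-/

open MeasureTheory ProbabilityTheory Filter
open scoped NNReal ENNReal

namespace MeasureTheory.Measure

theorem pi_conv_pi {ι M : Type*} [Fintype ι] [AddMonoid M] [MeasurableSpace M] [MeasurableAdd₂ M]
    (μ ν : ι → Measure M) [∀ i, IsFiniteMeasure (μ i)] [∀ i, IsFiniteMeasure (ν i)] :
    Measure.pi μ ∗ Measure.pi ν = Measure.pi fun i ↦ μ i ∗ ν i := by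
  have hE := measurePreserving_arrowProdEquivProdArrow M M ι μ ν
  rw [conv, ← hE.map_eq, map_map measurable_add hE.measurable]
  exact pi_map_pi fun _ ↦ measurable_add.aemeasurable

end MeasureTheory.Measure

namespace ProbabilityTheory

section Gaussian

variable {κ : Type*} [Fintype κ]

theorem pi_gaussianReal_map_const_smul (μ : κ → ℝ) (v : κ → ℝ≥0) (c : ℝ) :
    (Measure.pi fun j ↦ gaussianReal (μ j) (v j)).map (c • ·) =
      Measure.pi fun j ↦ gaussianReal (c * μ j) (.mk (c ^ 2) (sq_nonneg _) * v j) := by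
  simp_rw [← gaussianReal_map_const_mul]
  exact Measure.pi_map_pi fun _ ↦ (measurable_const_mul c).aemeasurable

theorem gaussianReal_le_smul_volume (μ : ℝ) {v : ℝ≥0} (hv : v ≠ 0) :
    gaussianReal μ v ≤ ENNReal.ofReal (√(2 * Real.pi * v))⁻¹ • volume := by
  rw [gaussianReal_of_var_ne_zero μ hv, ← withDensity_const]
  refine withDensity_mono (ae_of_all _ fun x ↦ ENNReal.ofReal_le_ofReal ?_)
  rw [gaussianPDFReal]
  refine mul_le_of_le_one_right (by positivity) (Real.exp_le_one_iff.2 ?_)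
  have : (0 : ℝ) ≤ v := v.2
  exact div_nonpos_of_nonpos_of_nonneg (neg_nonpos.2 (sq_nonneg _)) (by positivity)

theorem pi_gaussianReal_ball_le (μ : κ → ℝ) {v : ℝ≥0} (hv : v ≠ 0) (x : κ → ℝ) (t : ℝ) :
    (Measure.pi fun j ↦ gaussianReal (μ j) v) (Metric.ball x t) ≤
      ENNReal.ofReal (2 * t / √(2 * Real.pi * v)) ^ Fintype.card κ := by
  rcases le_or_gt t 0 with ht | ht
  · simp [Metric.ball_eq_empty.2 ht]
  rw [Measure.pi_ball _ _ ht, ← Finset.card_univ, ← Finset.prod_const]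
  refine Finset.prod_le_prod' fun j _ ↦ (gaussianReal_le_smul_volume (μ j) hv _).trans_eq ?_
  rw [Measure.smul_apply, Real.volume_ball, smul_eq_mul, ← ENNReal.ofReal_mul (by positivity),
    inv_mul_eq_div]

variable {Ω ι : Type*} {mΩ : MeasurableSpace Ω} {P : Measure Ω}

theorem iIndepFun.map_finsetSum_eq_pi_gaussianReal {X : ι → Ω → κ → ℝ} (hX : iIndepFun X P)
    {μ : ι → κ → ℝ} {v : ι → κ → ℝ≥0}
    (hlaw : ∀ i, P.map (X i) = Measure.pi fun j ↦ gaussianReal (μ i j) (v i j))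
    {s : Finset ι} (hs : s.Nonempty) :
    P.map (∑ i ∈ s, X i) =
      Measure.pi fun j ↦ gaussianReal (∑ i ∈ s, μ i j) (∑ i ∈ s, v i j) := by
  have := hX.isProbabilityMeasure
  have hXm (i : ι) : AEMeasurable (X i) P :=
    .of_map_ne_zero (by rw [hlaw i]; exact IsProbabilityMeasure.ne_zero _)
  induction hs using Finset.Nonempty.cons_induction with
  | singleton a => simpa using hlaw a
  | cons a s ha hs ih =>
    rw [Finset.sum_cons, add_comm,
      (hX.indepFun_finsetSum_of_notMem₀ hXm ha).map_add_eq_map_conv_map₀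
        (Finset.aemeasurable_sum s fun i _ ↦ hXm i) (hXm a),
      ih, hlaw a, Measure.pi_conv_pi]
    simp_rw [gaussianReal_conv_gaussianReal, Finset.sum_cons, add_comm]

theorem iIndepFun.map_sum_smul_eq_pi_gaussianReal [Fintype ι] [Nonempty ι]
    {X : ι → Ω → κ → ℝ} (hX : iIndepFun X P)
    (hlaw : ∀ i, P.map (X i) = Measure.pi fun _ ↦ gaussianReal 0 1) (c : ι → ℝ) :
    P.map (∑ i, c i • X i) =
      Measure.pi fun _ ↦ gaussianReal 0 (∑ i, .mk (c i ^ 2) (sq_nonneg _)) := by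
  have hXm (i : ι) : AEMeasurable (X i) P :=
    .of_map_ne_zero (by rw [hlaw i]; exact IsProbabilityMeasure.ne_zero _)
  have hcX : iIndepFun (fun i ↦ c i • X i) P :=
    hX.comp (fun i ↦ (c i • ·)) fun i ↦ measurable_const_smul (c i)
  have hlaw_smul (i : ι) : P.map (c i • X i) =
      Measure.pi fun _ ↦ gaussianReal (c i * 0) (.mk (c i ^ 2) (sq_nonneg _) * 1) := by
    rw [← pi_gaussianReal_map_const_smul, ← hlaw i,
      AEMeasurable.map_map_of_aemeasurable (measurable_const_smul (c i)).aemeasurable (hXm i)]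
    rfl
  simpa using hcX.map_finsetSum_eq_pi_gaussianReal hlaw_smul Finset.univ_nonempty

end Gaussian

end ProbabilityTheory

section Discrepancy

variable {ι E : Type*} [Fintype ι] [SeminormedAddCommGroup E] [Module ℝ E]

noncomputable def discrepancy (x : ι → E) : ℝ :=
  ⨅ σ : ι → Bool, ‖∑ i, (if σ i then (1 : ℝ) else -1) • x i‖

theorem discrepancy_lt_iff {x : ι → E} {t : ℝ} :
    discrepancy x < t ↔ ∃ σ : ι → Bool, ‖∑ i, (if σ i then (1 : ℝ) else -1) • x i‖ < t :=
  ciInf_lt_iff (Set.finite_range _).bddBelow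

end Discrepancy

namespace ProbabilityTheory

variable {Ω ι κ : Type*} {mΩ : MeasurableSpace Ω} {P : Measure Ω} [Fintype ι] [Fintype κ]

theorem measure_discrepancy_lt_le [Nonempty ι] {X : ι → Ω → κ → ℝ} (hX : iIndepFun X P)
    (hlaw : ∀ i, P.map (X i) = Measure.pi fun _ ↦ gaussianReal 0 1) (t : ℝ) :
    P {ω | discrepancy (X · ω) < t} ≤
      2 ^ Fintype.card ι *
        ENNReal.ofReal (2 * t / √(2 * Real.pi * Fintype.card ι)) ^ Fintype.card κ := by
  classical
  let S (σ : ι → Bool) : Ω → κ → ℝ := ∑ i, (if σ i then (1 : ℝ) else -1) • X i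
  have hS (σ : ι → Bool) :
      P.map (S σ) = Measure.pi fun _ ↦ gaussianReal 0 (Fintype.card ι) := by
    rw [hX.map_sum_smul_eq_pi_gaussianReal hlaw, ← Finset.card_univ, Finset.card_eq_sum_ones,
      Nat.cast_sum, Nat.cast_one]
    congr! 3
    exact Finset.sum_congr rfl fun i _ ↦ NNReal.eq (by split_ifs <;> norm_num)
  calc P {ω | discrepancy (X · ω) < t}
      = P (⋃ σ, S σ ⁻¹' Metric.ball 0 t) := by
        congr 1
        ext ω
        simp only [Set.mem_ofPred_eq, discrepancy_lt_iff, Set.mem_iUnion, Set.mem_preimage,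
          mem_ball_zero_iff, S, Finset.sum_apply, Pi.smul_apply]
    _ ≤ ∑ σ, P (S σ ⁻¹' Metric.ball 0 t) := measure_iUnion_fintype_le P _
    _ = ∑ _σ : ι → Bool,
          (Measure.pi fun _ ↦ gaussianReal 0 (Fintype.card ι)) (Metric.ball 0 t) := by
        refine Finset.sum_congr rfl fun σ _ ↦ ?_
        rw [← hS σ, Measure.map_apply_of_aemeasurable _ Metric.isOpen_ball.measurableSet]
        exact .of_map_ne_zero (by simp [hS σ, NeZero.ne])
    _ ≤ ∑ _σ : ι → Bool,
          ENNReal.ofReal (2 * t / √(2 * Real.pi * Fintype.card ι)) ^ Fintype.card κ :=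
        Finset.sum_le_sum fun _ _ ↦ pi_gaussianReal_ball_le _ (by simp) 0 t
    _ = _ := by simp

theorem measure_discrepancy_lt_le_ofReal_pow {n k : ℕ} (hn : n ≠ 0) (hk : k ≠ 0)
    {X : Fin n → Ω → Fin k → ℝ} (hX : iIndepFun X P)
    (hlaw : ∀ i, P.map (X i) = Measure.pi fun _ ↦ gaussianReal 0 1) (γ : ℝ) :
    P {ω | discrepancy (X · ω) < γ * √(Real.pi * n / 2) * (2 : ℝ) ^ (-(n : ℝ) / k)} ≤
      ENNReal.ofReal γ ^ k := by
  have : Nonempty (Fin n) := Fin.pos_iff_nonempty.1 (Nat.pos_of_ne_zero hn)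
  have hsqrt : √(2 * Real.pi * n) = 2 * √(Real.pi * n / 2) := by
    rw [show 2 * Real.pi * n = 2 ^ 2 * (Real.pi * n / 2) by ring, Real.sqrt_mul (by positivity),
      Real.sqrt_sq zero_le_two]
  have hpow : ENNReal.ofReal ((2 : ℝ) ^ (-(n : ℝ) / k)) ^ k = (2 ^ n)⁻¹ := by
    rw [← ENNReal.ofReal_pow (by positivity), ← Real.rpow_natCast, ← Real.rpow_mul zero_le_two,
      div_mul_cancel₀ _ (Nat.cast_ne_zero.2 hk), Real.rpow_neg zero_le_two, Real.rpow_natCast,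
      ENNReal.ofReal_inv_of_pos (by positivity), ENNReal.ofReal_pow zero_le_two,
      ENNReal.ofReal_ofNat]
  refine (measure_discrepancy_lt_le hX hlaw _).trans_eq ?_
  rw [Fintype.card_fin, Fintype.card_fin, hsqrt,
    show 2 * (γ * √(Real.pi * n / 2) * (2 : ℝ) ^ (-(n : ℝ) / k)) / (2 * √(Real.pi * n / 2)) =
      γ * (2 : ℝ) ^ (-(n : ℝ) / k) by field_simp,
    ENNReal.ofReal_mul' (by positivity), mul_pow, hpow, mul_comm, mul_assoc,
    ENNReal.inv_mul_cancel (by simp) (by simp), mul_one]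

theorem one_sub_ofReal_pow_le_measure_discrepancy_ge {n k : ℕ} (hn : n ≠ 0) (hk : k ≠ 0)
    {X : Fin n → Ω → Fin k → ℝ} (hX : iIndepFun X P)
    (hlaw : ∀ i, P.map (X i) = Measure.pi fun _ ↦ gaussianReal 0 1) (γ : ℝ) :
    1 - ENNReal.ofReal γ ^ k ≤
      P {ω | discrepancy (X · ω) ≥ γ * √(Real.pi * n / 2) * (2 : ℝ) ^ (-(n : ℝ) / k)} := by
  have := hX.isProbabilityMeasure
  set t := γ * √(Real.pi * n / 2) * (2 : ℝ) ^ (-(n : ℝ) / k)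
  have hcompl : {ω | discrepancy (X · ω) ≥ t}ᶜ = {ω | discrepancy (X · ω) < t} := by
    ext
    simp
  calc 1 - ENNReal.ofReal γ ^ k ≤ 1 - P {ω | discrepancy (X · ω) < t} :=
        tsub_le_tsub_left (measure_discrepancy_lt_le_ofReal_pow hn hk hX hlaw γ) 1
    _ ≤ P {ω | discrepancy (X · ω) ≥ t} := by
        -- the event need not be measurable, so `prob_compl_eq_one_sub` is not available
        rw [tsub_le_iff_left, ← hcompl, add_comm, ← measure_univ (μ := P)]
        exact measure_univ_le_add_compl _

end ProbabilityTheory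

theorem gaussian_discrepancy_lower_bound_general
    (m : ℕ → ℕ)
    (hm_top : Tendsto m atTop atTop)
    (γ' : ℝ) (hγ' : γ' < 1)
    (Ω : ℕ → Type) (mΩ : ∀ n, MeasurableSpace (Ω n))
    (P : ∀ n, Measure (Ω n))
    (X : ∀ n, Fin n → Ω n → (Fin (m n) → ℝ))
    (hX_indep : ∀ n, iIndepFun (X n) (P n))
    (hX_law : ∀ n i, Measure.map (X n i) (P n)
      = Measure.pi (fun _ : Fin (m n) => gaussianReal 0 1)) :
    Tendsto
      (fun n => ((P n) {ω | (⨅ σ : Fin n → Bool,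
          ‖∑ i, (if σ i then (1 : ℝ) else -1) • X n i ω‖)
        ≥ γ' * Real.sqrt (Real.pi * n / 2) * (2 : ℝ) ^ (-(n : ℝ) / (m n : ℝ))}).toReal)
      atTop (nhds 1) := by
  have hP n : IsProbabilityMeasure (P n) := (hX_indep n).isProbabilityMeasure
  have hsmall : Tendsto (fun n ↦ ENNReal.ofReal γ' ^ m n) atTop (nhds 0) :=
    (ENNReal.tendsto_pow_atTop_nhds_zero_of_lt_one (ENNReal.ofReal_lt_one.2 hγ')).comp hm_top
  have hlim : Tendsto (fun n ↦ P n {ω | discrepancy (X n · ω) ≥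
      γ' * √(Real.pi * n / 2) * (2 : ℝ) ^ (-(n : ℝ) / m n)}) atTop (nhds 1) := by
    refine tendsto_of_tendsto_of_tendsto_of_le_of_le' (g := fun n ↦ 1 - ENNReal.ofReal γ' ^ m n)
      ?_ tendsto_const_nhds ?_ (.of_forall fun n ↦ prob_le_one)
    · simpa using ENNReal.Tendsto.sub tendsto_const_nhds hsmall (.inl ENNReal.one_ne_top)
    · filter_upwards [eventually_ne_atTop 0, hm_top.eventually_ne_atTop 0] with n hn hmn
      exact one_sub_ofReal_pow_le_measure_discrepancy_ge hn hmn (hX_indep n) (hX_law n) γ'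
  exact (ENNReal.tendsto_toReal ENNReal.one_ne_top).comp hlim

/-- **Statement 0.** If `m = m(n) → ∞`, `m(n)/n → 0`, and `γ > 1`, then for i.i.d. standard
Gaussian vectors `X_1, …, X_n` in `ℝ^m`, the probability that the discrepancy
`min_{σ ∈ {±1}^n} ‖∑ σ_i X_i‖_∞` is at least `γ' √(πn/2) 2^{-n/m}` tends to `1`. -/
theorem gaussian_discrepancy_lower_bound
    (m : ℕ → ℕ) (hm_pos : ∀ n, 0 < m n)
    (hm_top : Tendsto m atTop atTop)
    (hm_sub : Tendsto (fun n => (m n : ℝ) / (n : ℝ)) atTop (nhds 0))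
    (γ' : ℝ) (hγ' : γ' < 1)
    (Ω : ℕ → Type) (mΩ : ∀ n, MeasurableSpace (Ω n))
    (P : ∀ n, Measure (Ω n)) (hP : ∀ n, IsProbabilityMeasure (P n))
    (X : ∀ n, Fin n → Ω n → (Fin (m n) → ℝ))
    (hX_indep : ∀ n, iIndepFun (X n) (P n))
    (hX_law : ∀ n i, Measure.map (X n i) (P n)
      = Measure.pi (fun _ : Fin (m n) => gaussianReal 0 1)) :
    Tendsto
      (fun n => ((P n) {ω | (⨅ σ : Fin n → Bool,
          ‖∑ i, (if σ i then (1 : ℝ) else -1) • X n i ω‖)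
        ≥ γ' * Real.sqrt (Real.pi * n / 2) * (2 : ℝ) ^ (-(n : ℝ) / (m n : ℝ))}).toReal)
      atTop (nhds 1) :=
  gaussian_discrepancy_lower_bound_general m hm_top γ' hγ' Ω mΩ P X hX_indep hX_law
end

section
/- Let m = m(n) be a sequence of positive integers with m(n)/n → 0 as n → ∞, fix γ > 1, and set ε = γ·2^{-n/m}·√(πn/2). Define L = 2^n·Σ_{k=⌈n/4⌉}^{⌊3n/4⌋} C(n,k)·P_{ρ_k}( |√n·X| ≤ ε and |√n·Y| ≤ ε )^m, where ρ_k = 1 − 2k/n. Then L ≤ (1 + o(1))·(2^n·P(|Z| ≤ ε/√n)^m)² as n → ∞. -/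
/-!
Conditionally on `X = x`, the second coordinate of `corrPair ρ` is `N(ρx, 1 - ρ²)`. Averaging
its density over the shifts `±ρx` replaces the cross term by a `cosh`, so the box `[-t, t]²`
has `corrPair ρ`-measure at most `(1 - ρ²)^{-1/2} e^{O(ρ² t⁴)} P(|Z| ≤ t)²`. Here
`t = ε/√n → 0` because `m/n → 0`, so for `|ρ| ≤ 1/2` each term is at most
`e^{2ρ²} P(|Z| ≤ t)²` and `L ≤ 2^n P(|Z| ≤ t)^{2m} ∑_k C(n,k) e^{2m ρ_k²}`. Writing
`e^{aρ²} = E e^{√(2a) ρ Z}` turns the binomial sum into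
`E (2 cosh (√(2a) Z / n))^n ≤ 2^n E e^{a Z² / n} = 2^n (1 - 2a/n)^{-1/2}`,
which is `2^n (1 + O(m/n))`.
-/

open MeasureTheory ProbabilityTheory Filter

/-- Joint law of a `ρ`-correlated pair of standard Gaussians. -/
noncomputable def corrPair (ρ : ℝ) : Measure (ℝ × ℝ) :=
  Measure.map (fun p : ℝ × ℝ => (p.1, ρ * p.1 + Real.sqrt (1 - ρ ^ 2) * p.2))
    ((gaussianReal 0 1).prod (gaussianReal 0 1))

open Real Set Topology
open scoped NNReal ENNReal

lemma exp_add_add_exp_sub_le (a b : ℝ) :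
    exp (a + b) + exp (a - b) ≤ 2 * exp (a + b ^ 2 / 2) := by
  have h : exp (a + b) + exp (a - b) = 2 * exp a * cosh b := by
    rw [cosh_eq, exp_add, exp_sub, exp_neg]; field_simp
  rw [h, exp_add, mul_assoc]
  gcongr
  exact cosh_le_exp_half_sq b

lemma inv_sqrt_one_sub_le_one_add {u : ℝ} (hu0 : 0 ≤ u) (hu : u ≤ 1 / 2) :
    (√(1 - u))⁻¹ ≤ 1 + u := by
  rw [inv_le_comm₀ (sqrt_pos.mpr (by linarith)) (by linarith),
    le_sqrt (by positivity) (by linarith), inv_pow, inv_le_iff_one_le_mul₀ (by positivity)]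
  nlinarith [mul_nonneg hu0 hu0, mul_nonneg (mul_nonneg hu0 hu0) hu0]

lemma sum_choose_mul_exp_le (n : ℕ) (s : ℝ) :
    ∑ k ∈ Finset.range (n + 1), (n.choose k : ℝ) * exp (s * (n - 2 * k))
      ≤ 2 ^ n * exp (n * (s ^ 2 / 2)) := by
  have h : ∑ k ∈ Finset.range (n + 1), (n.choose k : ℝ) * exp (s * (n - 2 * k))
      = (exp (-s) + exp s) ^ n := by
    rw [add_pow]
    refine Finset.sum_congr rfl fun k hk => ?_
    rw [← exp_nat_mul, ← exp_nat_mul, ← exp_add,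
      Nat.cast_sub (Nat.lt_succ_iff.mp (Finset.mem_range.mp hk))]
    ring_nf
  rw [h, exp_nat_mul, ← mul_pow]
  gcongr
  linarith [cosh_eq s ▸ cosh_le_exp_half_sq s]

lemma exp_neg_sq_div_two_add_mul (b x : ℝ) :
    exp (-x ^ 2 / 2 + b * x) = exp (b ^ 2 / 2) * exp (-(1 / 2) * (x - b) ^ 2) := by
  rw [← exp_add]; ring_nf

lemma integrable_exp_neg_sq_div_two_add_mul (b : ℝ) :
    Integrable fun x : ℝ => exp (-x ^ 2 / 2 + b * x) := by
  simp_rw [exp_neg_sq_div_two_add_mul b]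
  exact ((integrable_exp_neg_mul_sq (by norm_num)).comp_sub_right b).const_mul _

lemma integral_exp_neg_sq_div_two_add_mul (b : ℝ) :
    ∫ x, exp (-x ^ 2 / 2 + b * x) = √(2 * π) * exp (b ^ 2 / 2) := by
  simp_rw [exp_neg_sq_div_two_add_mul b]
  rw [integral_const_mul, integral_sub_right_eq_self (fun x => exp (-(1 / 2) * x ^ 2)) b,
    integral_gaussian]
  norm_num; ring

lemma sum_choose_mul_exp_sq_le {n : ℕ} (hn : 0 < n) {a : ℝ} (ha0 : 0 ≤ a) (ha : 4 * a ≤ n) :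
    ∑ k ∈ Finset.range (n + 1), (n.choose k : ℝ) * exp (a * (1 - 2 * k / n) ^ 2)
      ≤ 2 ^ n * (1 + 2 * a / n) := by
  have hn' : (0 : ℝ) < n := by exact_mod_cast hn
  set s := √(2 * a)
  have hs : s ^ 2 = 2 * a := sq_sqrt (by positivity)
  have hc : 0 < √(2 * π) := sqrt_pos.mpr (by positivity)
  -- `exp (a ρ²) = E[exp (s ρ Z)]` for a standard Gaussian `Z`
  have hlin (ρ : ℝ) :
      exp (a * ρ ^ 2) = (√(2 * π))⁻¹ * ∫ x, exp (-x ^ 2 / 2 + s * ρ * x) := by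
    rw [integral_exp_neg_sq_div_two_add_mul, ← mul_assoc, inv_mul_cancel₀ hc.ne', one_mul,
      mul_pow, hs]
    ring_nf
  have hpt (x : ℝ) : ∑ k ∈ Finset.range (n + 1),
      (n.choose k : ℝ) * exp (-x ^ 2 / 2 + s * (1 - 2 * k / n) * x)
        ≤ 2 ^ n * exp (-(1 / 2 - a / n) * x ^ 2) :=
    calc _ = exp (-x ^ 2 / 2) * ∑ k ∈ Finset.range (n + 1),
          (n.choose k : ℝ) * exp (s * x / n * (n - 2 * k)) := by
          rw [Finset.mul_sum]
          refine Finset.sum_congr rfl fun k _ => ?_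
          rw [mul_left_comm, ← exp_add]
          congr 2
          field_simp
      _ ≤ exp (-x ^ 2 / 2) * (2 ^ n * exp (n * ((s * x / n) ^ 2 / 2))) := by
          gcongr
          exact sum_choose_mul_exp_le n _
      _ = 2 ^ n * exp (-(1 / 2 - a / n) * x ^ 2) := by
          rw [mul_left_comm, ← exp_add, div_pow, mul_pow, hs]
          congr 2
          field_simp
          ring
  have hu : 0 < 1 - 2 * a / n := by rw [sub_pos, div_lt_iff₀ hn']; linarith
  have hq : 0 < 1 / 2 - a / n := by linarith [mul_div_assoc 2 a (n : ℝ)]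
  calc _ = (√(2 * π))⁻¹ * ∫ x, ∑ k ∈ Finset.range (n + 1),
        (n.choose k : ℝ) * exp (-x ^ 2 / 2 + s * (1 - 2 * k / n) * x) := by
        simp_rw [hlin]
        rw [integral_finsetSum _ fun k _ => (integrable_exp_neg_sq_div_two_add_mul _).const_mul _,
          Finset.mul_sum]
        refine Finset.sum_congr rfl fun k _ => ?_
        rw [integral_const_mul]
        ring
    _ ≤ (√(2 * π))⁻¹ * ∫ x, 2 ^ n * exp (-(1 / 2 - a / n) * x ^ 2) := by
        refine mul_le_mul_of_nonneg_left (integral_mono ?_ ?_ hpt) (by positivity)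
        · exact integrable_finsetSum _ fun k _ =>
            (integrable_exp_neg_sq_div_two_add_mul _).const_mul _
        · exact (integrable_exp_neg_mul_sq hq).const_mul _
    _ = 2 ^ n * (√(1 - 2 * a / n))⁻¹ := by
        rw [integral_const_mul, integral_gaussian]
        have : π / (1 / 2 - a / n) = 2 * π / (1 - 2 * a / n) := by
          field_simp
        rw [this, sqrt_div' _ hu.le]
        field_simp
    _ ≤ 2 ^ n * (1 + 2 * a / n) := by
        gcongr
        exact inv_sqrt_one_sub_le_one_add (by positivity) (by rw [div_le_iff₀ hn']; linarith)

lemma gaussianPDFReal_add_gaussianPDFReal_neg_le (θ z : ℝ) {v : ℝ≥0} (hv0 : 0 < v)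
    (hv1 : v ≤ 1) :
    gaussianPDFReal θ v z + gaussianPDFReal (-θ) v z
      ≤ 2 * ((√v)⁻¹ * exp (z ^ 2 * θ ^ 2 / (2 * v ^ 2))) * gaussianPDFReal 0 1 z := by
  have hv0' : (0 : ℝ) < v := hv0
  have hv1' : (v : ℝ) ≤ 1 := hv1
  have hexp : -(z ^ 2 + θ ^ 2) / (2 * v) + (z * θ / v) ^ 2 / 2
      ≤ -z ^ 2 / 2 + z ^ 2 * θ ^ 2 / (2 * v ^ 2) := by
    have h1 : z ^ 2 / 2 ≤ z ^ 2 / (2 * v) := by gcongr; linarith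
    have h2 : 0 ≤ θ ^ 2 / (2 * v) := by positivity
    calc _ = -(z ^ 2 / (2 * v)) - θ ^ 2 / (2 * v) + z ^ 2 * θ ^ 2 / (2 * v ^ 2) := by ring
      _ ≤ _ := by linarith
  calc gaussianPDFReal θ v z + gaussianPDFReal (-θ) v z
      = (√(2 * π * v))⁻¹ * (exp (-(z ^ 2 + θ ^ 2) / (2 * v) + z * θ / v)
          + exp (-(z ^ 2 + θ ^ 2) / (2 * v) - z * θ / v)) := by
        simp only [gaussianPDFReal]
        rw [← mul_add]
        congr 3 <;> field_simp <;> ring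
    _ ≤ (√(2 * π * v))⁻¹
          * (2 * exp (-(z ^ 2 + θ ^ 2) / (2 * v) + (z * θ / v) ^ 2 / 2)) := by
        gcongr
        exact exp_add_add_exp_sub_le _ _
    _ ≤ (√(2 * π * v))⁻¹ * (2 * exp (-z ^ 2 / 2 + z ^ 2 * θ ^ 2 / (2 * v ^ 2))) := by
        gcongr
    _ = _ := by
        simp only [gaussianPDFReal, NNReal.coe_one, mul_one, sub_zero]
        rw [exp_add, sqrt_mul (by positivity), mul_inv]
        ring

lemma gaussianReal_neg_Icc (θ t : ℝ) (v : ℝ≥0) :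
    gaussianReal (-θ) v (Icc (-t) t) = gaussianReal θ v (Icc (-t) t) := by
  rw [← gaussianReal_map_neg, Measure.map_apply measurable_neg measurableSet_Icc, neg_preimage,
    neg_Icc, neg_neg]

lemma gaussianReal_Icc_le (θ t : ℝ) {v : ℝ≥0} (hv0 : 0 < v) (hv1 : v ≤ 1) :
    gaussianReal θ v (Icc (-t) t)
      ≤ ENNReal.ofReal ((√v)⁻¹ * exp (t ^ 2 * θ ^ 2 / (2 * v ^ 2)))
        * gaussianReal 0 1 (Icc (-t) t) := by
  obtain ⟨K, hK⟩ : ∃ K, K = (√v)⁻¹ * exp (t ^ 2 * θ ^ 2 / (2 * v ^ 2)) := ⟨_, rfl⟩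
  have hK0 : 0 ≤ K := hK ▸ by positivity
  rw [← hK]
  have hpt : ∀ z ∈ Icc (-t) t, gaussianPDF θ v z + gaussianPDF (-θ) v z
      ≤ ENNReal.ofReal (2 * K) * gaussianPDF 0 1 z := by
    intro z hz
    have hz2 : z ^ 2 ≤ t ^ 2 := sq_le_sq' hz.1 hz.2
    rw [gaussianPDF, gaussianPDF, gaussianPDF,
      ← ENNReal.ofReal_add (gaussianPDFReal_nonneg _ _ _) (gaussianPDFReal_nonneg _ _ _),
      ← ENNReal.ofReal_mul (by positivity : (0 : ℝ) ≤ 2 * K)]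
    refine ENNReal.ofReal_le_ofReal
      ((gaussianPDFReal_add_gaussianPDFReal_neg_le θ z hv0 hv1).trans ?_)
    rw [hK]
    gcongr
    exact gaussianPDFReal_nonneg _ _ _
  refine (ENNReal.mul_le_mul_iff_right two_ne_zero ENNReal.ofNat_ne_top).mp ?_
  calc 2 * gaussianReal θ v (Icc (-t) t)
      = ∫⁻ z in Icc (-t) t, gaussianPDF θ v z + gaussianPDF (-θ) v z := by
        rw [lintegral_add_left (measurable_gaussianPDF _ _), ← gaussianReal_apply _ hv0.ne',
          ← gaussianReal_apply _ hv0.ne', gaussianReal_neg_Icc, two_mul]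
    _ ≤ ∫⁻ z in Icc (-t) t, ENNReal.ofReal (2 * K) * gaussianPDF 0 1 z :=
        setLIntegral_mono ((measurable_gaussianPDF _ _).const_mul _) hpt
    _ = 2 * (ENNReal.ofReal K * gaussianReal 0 1 (Icc (-t) t)) := by
        rw [lintegral_const_mul _ (measurable_gaussianPDF _ _),
          ← gaussianReal_apply _ one_ne_zero, ENNReal.ofReal_mul zero_le_two,
          ENNReal.ofReal_ofNat, mul_assoc]

lemma corrPair_prod_apply (ρ : ℝ) {A B : Set ℝ} (hA : MeasurableSet A) (hB : MeasurableSet B) :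
    corrPair ρ (A ×ˢ B)
      = ∫⁻ x in A, gaussianReal (ρ * x) (1 - ρ ^ 2).toNNReal B ∂gaussianReal 0 1 := by
  set c := √(1 - ρ ^ 2)
  have hsection (x : ℝ) : gaussianReal 0 1 ((fun y => ρ * x + c * y) ⁻¹' B)
      = gaussianReal (ρ * x) (1 - ρ ^ 2).toNNReal B := by
    have hmap : (gaussianReal 0 1).map (fun y => ρ * x + c * y)
        = gaussianReal (ρ * x) (1 - ρ ^ 2).toNNReal := by
      rw [show (fun y => ρ * x + c * y) = (ρ * x + ·) ∘ (c * ·) from rfl,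
        ← Measure.map_map (by fun_prop) (by fun_prop), gaussianReal_map_const_mul,
        gaussianReal_map_const_add]
      congr 1
      · ring
      · ext; simp [c, sq_sqrt']
    rw [← hmap, Measure.map_apply (by fun_prop) hB]
  rw [corrPair, Measure.map_apply (by fun_prop) (hA.prod hB),
    Measure.prod_apply
      ((by fun_prop : Measurable fun p : ℝ × ℝ => (p.1, ρ * p.1 + c * p.2)) (hA.prod hB)),
    ← lintegral_indicator hA]
  congr with x
  by_cases hx : x ∈ A
  · rw [indicator_of_mem hx, ← hsection]
    congr 1
    ext y
    simp [hx, c]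
  · rw [indicator_of_notMem hx, ← measure_empty (μ := gaussianReal 0 1)]
    congr 1
    ext y
    simp [hx]

lemma corrPair_Icc_prod_Icc_le {ρ : ℝ} (hρ : ρ ^ 2 < 1) (t : ℝ) :
    corrPair ρ (Icc (-t) t ×ˢ Icc (-t) t)
      ≤ ENNReal.ofReal ((√(1 - ρ ^ 2))⁻¹ * exp (t ^ 4 * ρ ^ 2 / (2 * (1 - ρ ^ 2) ^ 2)))
        * gaussianReal 0 1 (Icc (-t) t) ^ 2 := by
  set v := (1 - ρ ^ 2).toNNReal
  have hv : (v : ℝ) = 1 - ρ ^ 2 := Real.coe_toNNReal _ (by linarith)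
  have hv0 : 0 < v := Real.toNNReal_pos.mpr (by linarith)
  have hv1 : v ≤ 1 := Real.toNNReal_le_one.mpr (by linarith [sq_nonneg ρ])
  rw [corrPair_prod_apply ρ measurableSet_Icc measurableSet_Icc, sq (gaussianReal 0 1 _),
    ← mul_assoc, ← setLIntegral_const]
  refine setLIntegral_mono measurable_const fun x hx => (gaussianReal_Icc_le _ _ hv0 hv1).trans ?_
  rw [hv]
  gcongr ENNReal.ofReal (_ * exp (?_ / _)) * _
  calc t ^ 2 * (ρ * x) ^ 2 = ρ ^ 2 * (t ^ 2 * x ^ 2) := by ring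
    _ ≤ ρ ^ 2 * (t ^ 2 * t ^ 2) := by gcongr ρ ^ 2 * (t ^ 2 * ?_); exact sq_le_sq' hx.1 hx.2
    _ = t ^ 4 * ρ ^ 2 := by ring

lemma inv_sqrt_one_sub_sq_mul_exp_le {ρ t : ℝ} (hρ : ρ ^ 2 ≤ 1 / 4) (ht : t ^ 2 ≤ 1) :
    (√(1 - ρ ^ 2))⁻¹ * exp (t ^ 4 * ρ ^ 2 / (2 * (1 - ρ ^ 2) ^ 2))
      ≤ exp (2 * ρ ^ 2) := by
  rw [show 2 * ρ ^ 2 = ρ ^ 2 + ρ ^ 2 by ring, exp_add]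
  gcongr
  · exact (inv_sqrt_one_sub_le_one_add (sq_nonneg ρ) (by linarith)).trans
      (by linarith [add_one_le_exp (ρ ^ 2)])
  · have ht4 : t ^ 4 ≤ 1 := by nlinarith [sq_nonneg t]
    have hden : 1 ≤ 2 * (1 - ρ ^ 2) ^ 2 := by nlinarith
    rw [div_le_iff₀ (by positivity)]
    nlinarith [sq_nonneg ρ]

lemma corrPair_Icc_prod_Icc_toReal_le {ρ t : ℝ} (hρ : ρ ^ 2 ≤ 1 / 4) (ht : t ^ 2 ≤ 1) :
    (corrPair ρ (Icc (-t) t ×ˢ Icc (-t) t)).toReal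
      ≤ exp (2 * ρ ^ 2) * (gaussianReal 0 1 (Icc (-t) t)).toReal ^ 2 := by
  have h := ENNReal.toReal_mono (by finiteness) (corrPair_Icc_prod_Icc_le (by linarith) t)
  rw [ENNReal.toReal_mul, ENNReal.toReal_pow, ENNReal.toReal_ofReal (by positivity)] at h
  exact h.trans (by gcongr; exact inv_sqrt_one_sub_sq_mul_exp_le hρ ht)

lemma sq_one_sub_two_mul_div_le {n k : ℕ} (hn : 0 < n)
    (hk : k ∈ Finset.Icc ((n + 3) / 4) (3 * n / 4)) : (1 - 2 * (k : ℝ) / n) ^ 2 ≤ 1 / 4 := by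
  have hn' : (0 : ℝ) < n := by exact_mod_cast hn
  obtain ⟨hk1, hk2⟩ := Finset.mem_Icc.mp hk
  have h1 : (n : ℝ) ≤ 4 * k := by exact_mod_cast (by omega : n ≤ 4 * k)
  have h2 : 4 * (k : ℝ) ≤ 3 * n := by exact_mod_cast (by omega : 4 * k ≤ 3 * n)
  have h3 : 1 / 2 ≤ 2 * (k : ℝ) / n := by rw [le_div_iff₀ hn']; linarith
  have h4 : 2 * (k : ℝ) / n ≤ 3 / 2 := by rw [div_le_iff₀ hn']; linarith
  nlinarith

lemma sum_choose_mul_corrPair_pow_le {n m : ℕ} (hn : 0 < n) (hm : 8 * m ≤ n) {t : ℝ}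
    (ht : t ^ 2 ≤ 1) :
    ∑ k ∈ Finset.Icc ((n + 3) / 4) (3 * n / 4),
        (n.choose k : ℝ) * (corrPair (1 - 2 * k / n) (Icc (-t) t ×ˢ Icc (-t) t)).toReal ^ m
      ≤ (1 + 4 * m / n) * 2 ^ n * ((gaussianReal 0 1 (Icc (-t) t)).toReal ^ m) ^ 2 := by
  set P := (gaussianReal 0 1 (Icc (-t) t)).toReal
  calc _ ≤ ∑ k ∈ Finset.Icc ((n + 3) / 4) (3 * n / 4),
        (n.choose k : ℝ) * (exp ((2 * m) * (1 - 2 * k / n) ^ 2) * (P ^ m) ^ 2) := by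
        gcongr with k hk
        calc _ ≤ (exp (2 * (1 - 2 * k / n) ^ 2) * P ^ 2) ^ m :=
              pow_le_pow_left₀ ENNReal.toReal_nonneg
                (corrPair_Icc_prod_Icc_toReal_le (sq_one_sub_two_mul_div_le hn hk) ht) m
          _ = _ := by rw [mul_pow, ← exp_nat_mul, ← pow_mul, ← pow_mul, mul_comm 2 m]; ring_nf
    _ ≤ ∑ k ∈ Finset.range (n + 1),
        (n.choose k : ℝ) * (exp ((2 * m) * (1 - 2 * k / n) ^ 2) * (P ^ m) ^ 2) :=
        Finset.sum_le_sum_of_subset_of_nonneg (fun k hk => by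
          rw [Finset.mem_range]; have := (Finset.mem_Icc.mp hk).2; omega)
          (fun k _ _ => by positivity)
    _ = (P ^ m) ^ 2 * ∑ k ∈ Finset.range (n + 1),
        (n.choose k : ℝ) * exp ((2 * m) * (1 - 2 * k / n) ^ 2) := by
        rw [Finset.mul_sum]
        exact Finset.sum_congr rfl fun _ _ => by ring
    _ ≤ (P ^ m) ^ 2 * (2 ^ n * (1 + 2 * (2 * m) / n)) := by
        gcongr
        exact sum_choose_mul_exp_sq_le hn (by positivity) (by norm_cast; omega)
    _ = _ := by ring

lemma setOf_abs_le_eq_Icc (t : ℝ) : {z : ℝ | |z| ≤ t} = Icc (-t) t := by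
  ext; simp [abs_le]

lemma setOf_abs_mul_le_eq_Icc {c : ℝ} (hc : 0 < c) (ε : ℝ) :
    {x : ℝ | |c * x| ≤ ε} = Icc (-(ε / c)) (ε / c) := by
  rw [← setOf_abs_le_eq_Icc]
  ext
  simp [abs_mul, abs_of_pos hc, le_div_iff₀' hc]

lemma tendsto_two_rpow_neg_div {m : ℕ → ℕ} (hm_pos : ∀ n, 0 < m n)
    (hm_sub : Tendsto (fun n => (m n : ℝ) / n) atTop (𝓝 0)) :
    Tendsto (fun n : ℕ => (2 : ℝ) ^ (-(n : ℝ) / m n)) atTop (𝓝 0) := by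
  have hpos : ∀ᶠ n : ℕ in atTop, (m n : ℝ) / n ∈ Ioi 0 := by
    filter_upwards [eventually_gt_atTop 0] with n hn
    have hm : (0 : ℝ) < m n := by exact_mod_cast hm_pos n
    have hn' : (0 : ℝ) < n := by exact_mod_cast hn
    exact div_pos hm hn'
  have h : Tendsto (fun n : ℕ => (n : ℝ) / m n) atTop atTop := by
    simpa only [Pi.inv_def, inv_div] using
      (tendsto_nhdsWithin_iff.mpr ⟨hm_sub, hpos⟩).inv_tendsto_nhdsGT_zero
  simp_rw [neg_div]
  exact (tendsto_rpow_atBot_of_base_gt_one 2 one_lt_two).comp (tendsto_neg_atTop_atBot.comp h)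

lemma tendsto_eps_div_sqrt {m : ℕ → ℕ} (hm_pos : ∀ n, 0 < m n)
    (hm_sub : Tendsto (fun n => (m n : ℝ) / n) atTop (𝓝 0)) {γ : ℝ} {ε : ℕ → ℝ}
    (hε : ∀ n, ε n = γ * (2 : ℝ) ^ (-(n : ℝ) / m n) * √(π * n / 2)) :
    Tendsto (fun n => ε n / √n) atTop (𝓝 0) := by
  have h := ((tendsto_two_rpow_neg_div hm_pos hm_sub).const_mul γ).mul_const √(π / 2)
  rw [mul_zero, zero_mul] at h
  refine h.congr' ?_
  filter_upwards [eventually_gt_atTop 0] with n hn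
  have hsn : 0 < √(n : ℝ) := sqrt_pos.mpr (by exact_mod_cast hn)
  rw [hε, show π * n / 2 = π / 2 * n by ring, sqrt_mul (by positivity)]
  field_simp

theorem laplace_main_term_bound_general
    (m : ℕ → ℕ) (hm_pos : ∀ n, 0 < m n)
    (hm_sub : Tendsto (fun n => (m n : ℝ) / (n : ℝ)) atTop (nhds 0))
    (γ : ℝ)
    (ε : ℕ → ℝ)
    (hε : ∀ n, ε n = γ * (2 : ℝ) ^ (-(n : ℝ) / (m n : ℝ)) * Real.sqrt (Real.pi * n / 2)) :
    ∃ e : ℕ → ℝ, Tendsto e atTop (nhds 0) ∧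
      ∀ᶠ n : ℕ in atTop,
        (2 : ℝ) ^ n * ∑ k ∈ Finset.Icc ((n + 3) / 4) (3 * n / 4), (n.choose k : ℝ) *
            ((corrPair (1 - 2 * (k : ℝ) / (n : ℝ)))
              {p : ℝ × ℝ | |Real.sqrt n * p.1| ≤ ε n ∧ |Real.sqrt n * p.2| ≤ ε n}).toReal
              ^ (m n)
          ≤ (1 + e n) * ((2 : ℝ) ^ n *
              ((gaussianReal 0 1) {z : ℝ | |z| ≤ ε n / Real.sqrt n}).toReal ^ (m n)) ^ 2 := by
  refine ⟨fun n => 4 * (m n : ℝ) / n, by simpa [mul_div_assoc] using hm_sub.const_mul 4, ?_⟩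
  have ht := (tendsto_eps_div_sqrt hm_pos hm_sub hε).pow 2
  rw [zero_pow two_ne_zero] at ht
  filter_upwards [eventually_gt_atTop 0, ht.eventually (eventually_le_nhds zero_lt_one),
    hm_sub.eventually (eventually_le_nhds (by norm_num : (0 : ℝ) < 1 / 8))] with n hn htn hmn
  have hn' : (0 : ℝ) < n := by exact_mod_cast hn
  have hm8 : 8 * m n ≤ n := by
    rw [div_le_iff₀ hn'] at hmn
    exact_mod_cast (by linarith : (8 * m n : ℝ) ≤ n)
  have hbox : {p : ℝ × ℝ | |√n * p.1| ≤ ε n ∧ |√n * p.2| ≤ ε n}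
      = {x | |√n * x| ≤ ε n} ×ˢ {x | |√n * x| ≤ ε n} := rfl
  rw [hbox, setOf_abs_mul_le_eq_Icc (sqrt_pos.mpr hn'), setOf_abs_le_eq_Icc]
  calc _ ≤ 2 ^ n * ((1 + 4 * m n / n) * 2 ^ n
          * ((gaussianReal 0 1 (Icc (-(ε n / √n)) (ε n / √n))).toReal ^ m n) ^ 2) := by
        gcongr
        exact sum_choose_mul_corrPair_pow_le hn hm8 htn
    _ = _ := by ring

/-- **Laplace method bound.** If `m(n)/n → 0`, `γ > 1` and
`ε = γ 2^{-n/m} √(πn/2)`, then the central part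
`L = 2^n ∑_{k=⌈n/4⌉}^{⌊3n/4⌋} C(n,k) P_{ρ_k}(|√n X| ≤ ε, |√n Y| ≤ ε)^m` satisfies
`L ≤ (1 + o(1)) (2^n P(|Z| ≤ ε/√n)^m)²` as `n → ∞`. -/
theorem laplace_main_term_bound
    (m : ℕ → ℕ) (hm_pos : ∀ n, 0 < m n)
    (hm_sub : Tendsto (fun n => (m n : ℝ) / (n : ℝ)) atTop (nhds 0))
    (γ : ℝ) (hγ : 1 < γ)
    (ε : ℕ → ℝ)
    (hε : ∀ n, ε n = γ * (2 : ℝ) ^ (-(n : ℝ) / (m n : ℝ)) * Real.sqrt (Real.pi * n / 2)) :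
    ∃ e : ℕ → ℝ, Tendsto e atTop (nhds 0) ∧
      ∀ᶠ n : ℕ in atTop,
        (2 : ℝ) ^ n * ∑ k ∈ Finset.Icc ((n + 3) / 4) (3 * n / 4), (n.choose k : ℝ) *
            ((corrPair (1 - 2 * (k : ℝ) / (n : ℝ)))
              {p : ℝ × ℝ | |Real.sqrt n * p.1| ≤ ε n ∧ |Real.sqrt n * p.2| ≤ ε n}).toReal
              ^ (m n)
          ≤ (1 + e n) * ((2 : ℝ) ^ n *
              ((gaussianReal 0 1) {z : ℝ | |z| ≤ ε n / Real.sqrt n}).toReal ^ (m n)) ^ 2 :=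
  laplace_main_term_bound_general m hm_pos hm_sub γ ε hε
end

section
/- Let m = m(n) be a sequence of positive integers with m(n)/n → 0 as n → ∞, fix γ > 1, and set ε = γ·2^{-n/m}·√(πn/2). Then for Z a standard Gaussian random variable, 2^n·P(|Z| ≤ ε/√n)^m ≥ (1 − o(1))·((γ+1)/2)^m as n → ∞. -/
/-!
The threshold `t = ε / √n` equals `γ √(π/2) 2^{-n/m}`, which tends to `0` because `n / m → ∞`.
Bounding the Gaussian density on `[-t, t]` below by its value at `t` gives
`P(|Z| ≤ t) ≥ 2 t φ(t) = γ 2^{-n/m} e^{-t²/2}`, and `γ e^{-t²/2} → γ > (γ + 1) / 2`.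
Raising to the `m`-th power turns `2^{-n/m}` into `2^{-n}`, which cancels `2^n`, so the bound
holds eventually with no error term at all.
-/

open MeasureTheory ProbabilityTheory Filter Real Topology
open scoped NNReal

theorem gaussianPDFReal_le_of_abs_sub_le {μ : ℝ} {v : ℝ≥0} {x y : ℝ} (h : |x - μ| ≤ |y - μ|) :
    gaussianPDFReal μ v y ≤ gaussianPDFReal μ v x := by
  have hsq : (x - μ) ^ 2 ≤ (y - μ) ^ 2 := sq_le_sq.mpr h
  unfold gaussianPDFReal
  gcongr

theorem two_mul_mul_gaussianPDFReal_le_gaussianReal {μ : ℝ} {v : ℝ≥0} (hv : v ≠ 0) {t : ℝ}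
    (ht : 0 ≤ t) :
    2 * t * gaussianPDFReal μ v (μ + t) ≤ (gaussianReal μ v {z | |z - μ| ≤ t}).toReal := by
  have hIcc : {z : ℝ | |z - μ| ≤ t} = Set.Icc (μ - t) (μ + t) := by
    rw [← closedBall_eq_Icc]
    rfl
  rw [hIcc, gaussianReal_apply_eq_integral μ hv,
    ENNReal.toReal_ofReal (integral_nonneg fun _ => gaussianPDFReal_nonneg _ _ _)]
  calc 2 * t * gaussianPDFReal μ v (μ + t)
      = ∫ _ in Set.Icc (μ - t) (μ + t), gaussianPDFReal μ v (μ + t) := by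
        rw [setIntegral_const, measureReal_def, Real.volume_Icc,
          ENNReal.toReal_ofReal (by linarith), smul_eq_mul]
        ring
    _ ≤ ∫ z in Set.Icc (μ - t) (μ + t), gaussianPDFReal μ v z := by
        refine setIntegral_mono_on (integrableOn_const measure_Icc_lt_top.ne)
          (integrable_gaussianPDFReal μ v).integrableOn measurableSet_Icc fun z hz => ?_
        refine gaussianPDFReal_le_of_abs_sub_le ?_
        rw [add_sub_cancel_left, abs_of_nonneg ht, abs_sub_le_iff]
        constructor <;> linarith [hz.1, hz.2]

theorem two_mul_sqrt_pi_div_two_mul_gaussianPDFReal (t : ℝ) :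
    2 * √(π / 2) * gaussianPDFReal 0 1 t = exp (-t ^ 2 / 2) := by
  have hsqrt : √(2 * π) = 2 * √(π / 2) := by
    rw [show 2 * π = 2 ^ 2 * (π / 2) by ring, sqrt_mul (by positivity), sqrt_sq zero_le_two]
  have : √(π / 2) ≠ 0 := by positivity
  simp only [gaussianPDFReal, NNReal.coe_one, mul_one, sub_zero, hsqrt]
  field_simp

theorem tendsto_div_atTop_of_tendsto_div_zero {m : ℕ → ℕ} (hm_pos : ∀ n, 0 < m n)
    (hm : Tendsto (fun n : ℕ => (m n : ℝ) / n) atTop (𝓝 0)) :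
    Tendsto (fun n : ℕ => (n : ℝ) / m n) atTop atTop := by
  have hpos : Tendsto (fun n : ℕ => (m n : ℝ) / n) atTop (𝓝[>] 0) := by
    refine tendsto_nhdsWithin_iff.mpr ⟨hm, ?_⟩
    filter_upwards [eventually_gt_atTop 0] with n hn
    have := hm_pos n
    exact Set.mem_Ioi.mpr (by positivity)
  simpa only [Pi.inv_def, inv_div] using hpos.inv_tendsto_nhdsGT_zero

theorem rpow_pow_mul_rpow_neg_div_mul_pow {a : ℝ} (ha : 0 < a) (n : ℕ) {m : ℕ} (hm : m ≠ 0)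
    (c : ℝ) : a ^ n * (a ^ (-(n : ℝ) / m) * c) ^ m = c ^ m := by
  have hinv : (a ^ (-(n : ℝ) / m)) ^ m * a ^ n = 1 := by
    rw [← rpow_natCast, ← rpow_mul ha.le, div_mul_cancel₀ _ (Nat.cast_ne_zero.mpr hm),
      rpow_neg ha.le, rpow_natCast, inv_mul_cancel₀ (by positivity)]
  rw [mul_pow, ← mul_assoc, mul_comm (a ^ n), hinv, one_mul]

/-- If `m(n)/n → 0`, `γ > 1` and `ε = γ 2^{-n/m} √(πn/2)`, then for a
standard Gaussian `Z`, `2^n P(|Z| ≤ ε/√n)^m ≥ (1 − o(1)) ((γ+1)/2)^m` as `n → ∞`. -/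
theorem first_moment_lower_bound
    (m : ℕ → ℕ) (hm_pos : ∀ n, 0 < m n)
    (hm_sub : Tendsto (fun n => (m n : ℝ) / (n : ℝ)) atTop (nhds 0))
    (γ : ℝ) (hγ : 1 < γ)
    (ε : ℕ → ℝ)
    (hε : ∀ n, ε n = γ * (2 : ℝ) ^ (-(n : ℝ) / (m n : ℝ)) * Real.sqrt (Real.pi * n / 2)) :
    ∃ e : ℕ → ℝ, Tendsto e atTop (nhds 0) ∧
      ∀ᶠ n : ℕ in atTop,
        (1 - e n) * ((γ + 1) / 2) ^ (m n)
          ≤ (2 : ℝ) ^ n *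
            ((gaussianReal 0 1) {z : ℝ | |z| ≤ ε n / Real.sqrt n}).toReal ^ (m n) := by
  refine ⟨0, tendsto_const_nhds, ?_⟩
  set s : ℕ → ℝ := fun n => (2 : ℝ) ^ (-(n : ℝ) / m n)
  have hs : Tendsto s atTop (𝓝 0) := by
    simp only [s, neg_div]
    exact (tendsto_rpow_atBot_of_base_gt_one 2 one_lt_two).comp
      (tendsto_neg_atTop_atBot.comp (tendsto_div_atTop_of_tendsto_div_zero hm_pos hm_sub))
  have hthreshold : ∀ n, 0 < n → ε n / √n = γ * √(π / 2) * s n := by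
    intro n hn
    have : √(n : ℝ) ≠ 0 := by positivity
    rw [hε, show π * n / 2 = π / 2 * n by ring, sqrt_mul (by positivity), mul_div_assoc,
      mul_div_cancel_right₀ _ this]
    exact mul_right_comm _ _ _
  have hdensity : ∀ᶠ n in atTop, (γ + 1) / 2 ≤ γ * exp (-(γ * √(π / 2) * s n) ^ 2 / 2) := by
    have hlim : Tendsto (fun n => γ * exp (-(γ * √(π / 2) * s n) ^ 2 / 2)) atTop (𝓝 γ) := by
      simpa using ((((hs.const_mul (γ * √(π / 2))).pow 2).neg.div_const 2).rexp).const_mul γ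
    exact hlim.eventually_const_le (by linarith)
  filter_upwards [eventually_gt_atTop 0, hdensity] with n hn hγn
  have hprob : s n * ((γ + 1) / 2) ≤ (gaussianReal 0 1 {z : ℝ | |z| ≤ ε n / √n}).toReal := by
    have ht : 0 ≤ γ * √(π / 2) * s n := by positivity
    calc s n * ((γ + 1) / 2)
        ≤ s n * (γ * exp (-(γ * √(π / 2) * s n) ^ 2 / 2)) := by gcongr
      _ = 2 * (γ * √(π / 2) * s n) * gaussianPDFReal 0 1 (0 + γ * √(π / 2) * s n) := by
        rw [zero_add, ← two_mul_sqrt_pi_div_two_mul_gaussianPDFReal]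
        ring
      _ ≤ _ := by
        simpa only [sub_zero, hthreshold n hn]
          using two_mul_mul_gaussianPDFReal_le_gaussianReal (μ := 0) one_ne_zero ht
  calc (1 - 0) * ((γ + 1) / 2) ^ m n
      = 2 ^ n * (s n * ((γ + 1) / 2)) ^ m n := by
        rw [sub_zero, one_mul, rpow_pow_mul_rpow_neg_div_mul_pow two_pos n (hm_pos n).ne']
    _ ≤ _ := by gcongr
end

section
/- For any vectors X_1, …, X_N ∈ ℝ^m there exists a signing σ ∈ {−1,+1}^N such that |Σ_{i=1}^N σ_i X_i|_∞ ≤ max over subsets S ⊆ {1, …, N} with |S| = m of Σ_{j ∈ S} |X_j|_∞. -/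
/-!
The set `K = balancedCube X` of coefficient vectors `x ∈ [-1, 1]^N` with `∑ xᵢ Xᵢ = 0` is
compact, convex and contains `0`, so by Krein–Milman it has an extreme point `x`. If more than
`m` coordinates of `x` were fractional, the corresponding `Xᵢ` would admit a linear dependence
`c`, and `x ± t c` would stay in `K` for small `t`, contradicting extremality. Rounding `x` to
signs `σ` then gives `∑ σᵢ Xᵢ = ∑ (σᵢ - xᵢ) Xᵢ`, where `|σᵢ - xᵢ| ≤ 1` and `σᵢ = xᵢ` off the at
most `m` fractional coordinates.
-/

open Finset Module Filter Topology

section LinearAlgebra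

variable {ι R E : Type*} [Fintype ι] [Ring R] [StrongRankCondition R] [AddCommGroup E]
  [Module R E] [Module.Finite R E]

theorem exists_ne_zero_sum_smul_eq_zero_of_finrank_lt_card (v : ι → E) {s : Finset ι}
    (h : finrank R E < #s) :
    ∃ c : ι → R, (∀ i ∉ s, c i = 0) ∧ ∑ i, c i • v i = 0 ∧ c ≠ 0 := by
  classical
  have hdep : ¬ LinearIndepOn R v (s : Set ι) := fun hli => by
    simpa using (hli.fintype_card_le_finrank).trans_lt h
  simp only [linearIndepOn_finset_iff, not_forall, exists_prop] at hdep
  obtain ⟨f, hf, i, hi, hfi⟩ := hdep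
  refine ⟨fun j => if j ∈ s then f j else 0, fun j hj => if_neg hj, ?_, fun hc => ?_⟩
  · simpa [ite_smul, Finset.sum_ite_mem] using hf
  · simpa [hi, hfi] using congr_fun hc i

end LinearAlgebra

section BalancedCube

variable {ι E : Type*} [Fintype ι]

def balancedCube [AddCommGroup E] [Module ℝ E] (X : ι → E) : Set (ι → ℝ) :=
  {x | (∀ i, |x i| ≤ 1) ∧ ∑ i, x i • X i = 0}

theorem zero_mem_balancedCube [AddCommGroup E] [Module ℝ E] (X : ι → E) :
    (0 : ι → ℝ) ∈ balancedCube X := by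
  simp [balancedCube]

theorem isCompact_balancedCube [NormedAddCommGroup E] [NormedSpace ℝ E] (X : ι → E) :
    IsCompact (balancedCube X) := by
  refine (isCompact_closedBall (0 : ι → ℝ) 1).of_isClosed_subset ?_ fun x hx => ?_
  · rw [balancedCube, Set.ofPred_and, Set.ofPred_forall]
    exact (isClosed_iInter fun i => isClosed_le (by fun_prop) continuous_const).inter
      (isClosed_eq (by fun_prop) continuous_const)
  · simpa [pi_norm_le_iff_of_nonneg] using hx.1

theorem eventually_add_smul_mem_balancedCube [AddCommGroup E] [Module ℝ E] {X : ι → E}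
    {x c : ι → ℝ} (hx : x ∈ balancedCube X) (hc : ∀ i, c i ≠ 0 → |x i| < 1)
    (hcX : ∑ i, c i • X i = 0) : ∀ᶠ t in 𝓝 (0 : ℝ), x + t • c ∈ balancedCube X := by
  have hcoord : ∀ i, ∀ᶠ t in 𝓝 (0 : ℝ), |x i + t * c i| ≤ 1 := fun i => by
    by_cases hci : c i = 0
    · simp [hci, hx.1 i]
    · have hcont : Tendsto (fun t : ℝ => |x i + t * c i|) (𝓝 0) (𝓝 |x i|) := by
        simpa using (continuous_const.add (continuous_id.mul continuous_const)).abs.tendsto (0 : ℝ)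
      exact (hcont.eventually (gt_mem_nhds (hc i hci))).mono fun _ ht => ht.le
  filter_upwards [eventually_all.2 hcoord] with t ht
  refine ⟨ht, ?_⟩
  simp [add_smul, mul_smul, sum_add_distrib, ← smul_sum, hx.2, hcX]

theorem card_abs_lt_one_le_finrank_of_mem_extremePoints [AddCommGroup E] [Module ℝ E]
    [FiniteDimensional ℝ E] {X : ι → E} {x : ι → ℝ}
    (hx : x ∈ (balancedCube X).extremePoints ℝ) :
    #{i | |x i| < 1} ≤ finrank ℝ E := by
  by_contra! h
  obtain ⟨c, hcs, hcX, hc0⟩ := exists_ne_zero_sum_smul_eq_zero_of_finrank_lt_card X h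
  have hc : ∀ i, c i ≠ 0 → |x i| < 1 := fun i hi => by
    by_contra hi'
    exact hi (hcs i (by simpa using hi'))
  obtain ⟨ε, hε, hball⟩ :=
    Metric.eventually_nhds_iff.1 (eventually_add_smul_mem_balancedCube hx.1 hc hcX)
  have hplus : x + (ε / 2) • c ∈ balancedCube X :=
    hball (by rw [Real.dist_eq, sub_zero, abs_of_pos (half_pos hε)]; linarith)
  have hminus : x - (ε / 2) • c ∈ balancedCube X := by
    rw [sub_eq_add_neg, ← neg_smul]
    exact hball (by rw [Real.dist_eq, sub_zero, abs_neg, abs_of_pos (half_pos hε)]; linarith)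
  have hfix := ((mem_extremePoints.1 hx).2 _ hplus _ hminus (mem_openSegment_add_sub x _)).1
  rw [add_eq_left, smul_eq_zero] at hfix
  exact hfix.elim (fun h => (half_pos hε).ne' h) hc0

end BalancedCube

theorem exists_sign_abs_sub_le {a : ℝ} (ha : |a| ≤ 1) :
    ∃ s : ℝ, (s = 1 ∨ s = -1) ∧ |s - a| ≤ if |a| < 1 then 1 else 0 := by
  rw [abs_le] at ha
  rcases le_or_gt 0 a with h | h
  · refine ⟨1, .inl rfl, ?_⟩
    split_ifs with h1
    · rw [abs_le]; constructor <;> linarith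
    · rw [abs_of_nonneg h] at h1; rw [abs_nonpos_iff]; linarith
  · refine ⟨-1, .inr rfl, ?_⟩
    split_ifs with h1
    · rw [abs_le]; constructor <;> linarith
    · rw [abs_of_neg h] at h1; rw [abs_nonpos_iff]; linarith

theorem exists_sign_norm_sum_smul_le {ι E : Type*} [Fintype ι] [SeminormedAddCommGroup E]
    [NormedSpace ℝ E] {X : ι → E} {x : ι → ℝ} (hx : x ∈ balancedCube X) :
    ∃ σ : ι → ℝ, (∀ i, σ i = 1 ∨ σ i = -1) ∧ ‖∑ i, σ i • X i‖ ≤ ∑ i with |x i| < 1, ‖X i‖ := by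
  choose σ hσ hσx using fun i => exists_sign_abs_sub_le (hx.1 i)
  refine ⟨σ, hσ, ?_⟩
  calc ‖∑ i, σ i • X i‖ = ‖∑ i, (σ i - x i) • X i‖ := by
        simp [sub_smul, sum_sub_distrib, hx.2]
    _ ≤ ∑ i, |σ i - x i| * ‖X i‖ := by
        simpa [norm_smul] using norm_sum_le univ fun i => (σ i - x i) • X i
    _ ≤ ∑ i, if |x i| < 1 then ‖X i‖ else 0 := sum_le_sum fun i _ => by
        simpa [ite_mul] using mul_le_mul_of_nonneg_right (hσx i) (norm_nonneg (X i))
    _ = ∑ i with |x i| < 1, ‖X i‖ := (sum_filter _ _).symm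

theorem exists_sign_norm_sum_smul_le_sum_of_card_le_finrank {ι E : Type*} [Fintype ι]
    [NormedAddCommGroup E] [NormedSpace ℝ E] [FiniteDimensional ℝ E] (X : ι → E) :
    ∃ σ : ι → ℝ, (∀ i, σ i = 1 ∨ σ i = -1) ∧
      ∃ T : Finset ι, #T ≤ finrank ℝ E ∧ ‖∑ i, σ i • X i‖ ≤ ∑ i ∈ T, ‖X i‖ := by
  obtain ⟨x, hx⟩ := (isCompact_balancedCube X).extremePoints_nonempty ⟨0, zero_mem_balancedCube X⟩
  obtain ⟨σ, hσ, hle⟩ := exists_sign_norm_sum_smul_le hx.1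
  exact ⟨σ, hσ, _, card_abs_lt_one_le_finrank_of_mem_extremePoints hx, hle⟩

/-- **REDUCE.** For any vectors `X_1, …, X_N ∈ ℝ^m` there is a signing
`σ ∈ {±1}^N` with `‖∑ σ_i X_i‖_∞` at most the maximum, over subsets `S ⊆ [N]` of size `m`
(of size `min m N` when `N < m`, i.e. the whole index set), of `∑_{j ∈ S} ‖X_j‖_∞`. -/
theorem reduce_exists_signing (m N : ℕ) (X : Fin N → Fin m → ℝ) :
    ∃ σ : Fin N → ℝ, (∀ i, σ i = 1 ∨ σ i = -1) ∧
      ‖∑ i, σ i • X i‖ ≤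
        (Finset.powersetCard (min m N) (Finset.univ : Finset (Fin N))).sup'
          (Finset.powersetCard_nonempty.mpr (by simp))
          (fun S => ∑ j ∈ S, ‖X j‖) := by
  obtain ⟨σ, hσ, T, hT, hle⟩ := exists_sign_norm_sum_smul_le_sum_of_card_le_finrank X
  have hTcard : #T ≤ min m N :=
    le_min (by simpa using hT) ((card_le_univ T).trans (by simp))
  obtain ⟨S, hTS, -, hS⟩ := exists_subsuperset_card_eq (subset_univ T) hTcard (by simp)
  refine ⟨σ, hσ, ?_⟩
  calc ‖∑ i, σ i • X i‖ ≤ ∑ i ∈ T, ‖X i‖ := hle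
    _ ≤ ∑ j ∈ S, ‖X j‖ := sum_le_sum_of_subset_of_nonneg hTS fun _ _ _ => norm_nonneg _
    _ ≤ _ := le_sup' (fun S => ∑ j ∈ S, ‖X j‖) (mem_powersetCard.2 ⟨subset_univ S, hS⟩)
end

section
/- There exists an absolute constant c* > 0 such that for every dimension m ≥ 1, every α > 0, and every vector ν ∈ ℝ^m, if u is a random vector with triangular distribution on [−α, α]^m, then E[ |⟨ν, u⟩| ] ≥ c*·α·|ν|_2. -/
open MeasureTheory ProbabilityTheory

/-- The uniform probability measure on the cube `[0, α]^m`. -/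
noncomputable def unifCube (m : ℕ) (α : ℝ) : Measure (Fin m → ℝ) :=
  Measure.pi fun _ : Fin m => (ENNReal.ofReal α)⁻¹ • volume.restrict (Set.Icc 0 α)

/-- The triangular distribution on `[−α, α]^m`: the law of the difference of two independent
random vectors, each uniform on `[0, α]^m`. -/
noncomputable def triCube (m : ℕ) (α : ℝ) : Measure (Fin m → ℝ) :=
  Measure.map (fun p => p.1 - p.2) ((unifCube m α).prod (unifCube m α))

/-!
Write `⟨ν, U - V⟩ = ⟨ν, U - α/2⟩ + ⟨-ν, V - α/2⟩` as a sum of `2m` independent centred terms,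
each a multiple of a variable uniform on `[-α/2, α/2]`, whose fourth moment `α⁴/80` is at most
three times the square `α⁴/144` of its second moment. This Gaussian-type bound
`E X⁴ ≤ 3 (E X²)²` survives independent centred sums, since
`E (X + Y)⁴ = E X⁴ + 6 E X² E Y² + E Y⁴`; so it holds for `⟨ν, u⟩`, whose second moment is
`α² |ν|² / 6`. Integrating the pointwise bound `x² ≤ L |x| + x⁴ / L²` with `L² = 6 E X²` gives
`E X² ≤ 24 (E |X|)²`, that is `E |⟨ν, u⟩| ≥ α |ν| / 12`.
-/

section Moments

variable {Ω : Type*} {mΩ : MeasurableSpace Ω} {μ : Measure Ω} {X Y : Ω → ℝ}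

lemma sq_le_mul_abs_add_pow_four_div (x : ℝ) {L : ℝ} (hL : 0 < L) :
    x ^ 2 ≤ L * |x| + x ^ 4 / L ^ 2 := by
  rcases le_total |x| L with hx | hx
  · have : x ^ 2 ≤ L * |x| := by
      rw [← sq_abs]; nlinarith [abs_nonneg x]
    have : 0 ≤ x ^ 4 / L ^ 2 := by positivity
    linarith
  · have hLx : L ^ 2 ≤ x ^ 2 := by rw [← sq_abs x]; gcongr
    have : x ^ 2 ≤ x ^ 4 / L ^ 2 := by
      rw [le_div_iff₀ (by positivity)]; nlinarith [sq_nonneg x]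
    nlinarith [abs_nonneg x]

lemma MeasureTheory.MemLp.integrable_pow_of_le [IsFiniteMeasure μ] {p k : ℕ} (hX : MemLp X p μ)
    (hk : k ≤ p) :
    Integrable (fun ω => X ω ^ k) μ :=
  (hX.mono_exponent (by exact_mod_cast hk)).integrable_norm_pow'.mono'
    (hX.aestronglyMeasurable.pow k) (ae_of_all _ fun ω => (norm_pow _ _).le)

lemma integral_sq_le_of_integral_pow_four_le [IsFiniteMeasure μ] (hX : MemLp X 4 μ) {κ : ℝ}
    (hκ : 0 < κ) (h : ∫ ω, X ω ^ 4 ∂μ ≤ κ * (∫ ω, X ω ^ 2 ∂μ) ^ 2) :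
    ∫ ω, X ω ^ 2 ∂μ ≤ 8 * κ * (∫ ω, |X ω| ∂μ) ^ 2 := by
  set s := ∫ ω, X ω ^ 2 ∂μ
  set e := ∫ ω, |X ω| ∂μ
  rcases (integral_nonneg fun ω => sq_nonneg (X ω) : 0 ≤ s).eq_or_lt with hs | hs
  · rw [show s = 0 from hs.symm]; positivity
  -- this choice of `L` makes the fourth-moment term at most `s / 2`
  set L := √(2 * κ * s)
  have hL : 0 < L := by positivity
  have hL2 : L ^ 2 = 2 * κ * s := Real.sq_sqrt (by positivity)
  have hpoint : s ≤ L * e + (∫ ω, X ω ^ 4 ∂μ) / L ^ 2 := by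
    have h2 := hX.integrable_pow_of_le (k := 2) (by norm_num)
    have h4 := hX.integrable_pow_of_le (k := 4) le_rfl
    have h1 := (hX.integrable (by norm_num)).abs
    rw [← integral_const_mul, ← integral_div, ← integral_add (h1.const_mul L) (h4.div_const _)]
    exact integral_mono h2 ((h1.const_mul L).add (h4.div_const _))
      fun ω => sq_le_mul_abs_add_pow_four_div (X ω) hL
  have hfourth : (∫ ω, X ω ^ 4 ∂μ) / L ^ 2 ≤ s / 2 := by
    rw [div_le_iff₀ (by positivity), hL2]; nlinarith
  have he : s ≤ 2 * L * e := by linarith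
  nlinarith [(integral_nonneg fun ω => abs_nonneg (X ω) : 0 ≤ e)]

lemma ProbabilityTheory.IndepFun.integral_add_pow [IsFiniteMeasure μ] {n : ℕ}
    (hXY : IndepFun X Y μ) (hX : MemLp X n μ) (hY : MemLp Y n μ) :
    ∫ ω, (X ω + Y ω) ^ n ∂μ = ∑ j ∈ Finset.range (n + 1),
      (∫ ω, X ω ^ j ∂μ) * (∫ ω, Y ω ^ (n - j) ∂μ) * n.choose j := by
  have hterm : ∀ j ∈ Finset.range (n + 1),
      IndepFun (fun ω => X ω ^ j) (fun ω => Y ω ^ (n - j)) μ ∧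
        Integrable (fun ω => X ω ^ j) μ ∧ Integrable (fun ω => Y ω ^ (n - j)) μ := fun j hj =>
    ⟨hXY.comp (measurable_id.pow_const j) (measurable_id.pow_const (n - j)),
      hX.integrable_pow_of_le (Finset.mem_range_succ_iff.mp hj),
      hY.integrable_pow_of_le (n.sub_le j)⟩
  simp_rw [add_pow]
  rw [integral_finsetSum _ fun j hj => ?_]
  · refine Finset.sum_congr rfl fun j hj => ?_
    obtain ⟨hind, hXj, hYj⟩ := hterm j hj
    rw [integral_mul_const, hind.integral_fun_mul_eq_mul_integral hXj.1 hYj.1]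
  · obtain ⟨hind, hXj, hYj⟩ := hterm j hj
    exact (hind.integrable_mul hXj hYj).mul_const _

lemma ProbabilityTheory.IndepFun.integral_add_sq [IsProbabilityMeasure μ] (hXY : IndepFun X Y μ)
    (hX : MemLp X 2 μ) (hY : MemLp Y 2 μ) (hX0 : ∫ ω, X ω ∂μ = 0) :
    ∫ ω, (X ω + Y ω) ^ 2 ∂μ = ∫ ω, X ω ^ 2 ∂μ + ∫ ω, Y ω ^ 2 ∂μ := by
  rw [hXY.integral_add_pow (by exact_mod_cast hX) (by exact_mod_cast hY)]
  norm_num [Finset.sum_range_succ, hX0]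
  ring

lemma ProbabilityTheory.IndepFun.integral_add_pow_four [IsProbabilityMeasure μ]
    (hXY : IndepFun X Y μ) (hX : MemLp X 4 μ) (hY : MemLp Y 4 μ) (hX0 : ∫ ω, X ω ∂μ = 0)
    (hY0 : ∫ ω, Y ω ∂μ = 0) :
    ∫ ω, (X ω + Y ω) ^ 4 ∂μ =
      ∫ ω, X ω ^ 4 ∂μ + 6 * (∫ ω, X ω ^ 2 ∂μ) * (∫ ω, Y ω ^ 2 ∂μ) + ∫ ω, Y ω ^ 4 ∂μ := by
  rw [hXY.integral_add_pow (by exact_mod_cast hX) (by exact_mod_cast hY)]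
  norm_num [Finset.sum_range_succ, Nat.choose, hX0, hY0]
  ring

lemma MeasureTheory.MeasurePreserving.integral_comp_of_aestronglyMeasurable {Ω' : Type*}
    {mΩ' : MeasurableSpace Ω'} {ν : Measure Ω'} {T : Ω' → Ω} (hT : MeasurePreserving T ν μ)
    {G : Type*} [NormedAddCommGroup G] [NormedSpace ℝ G] {g : Ω → G}
    (hg : AEStronglyMeasurable g μ) : ∫ x, g (T x) ∂ν = ∫ ω, g ω ∂μ := by
  rw [← hT.map_eq] at hg ⊢
  exact (integral_map hT.aemeasurable hg).symm

/-- Kurtosis at most that of a Gaussian, for a centred variable; unlike most moment bounds, this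
one is preserved by independent sums. -/
structure KurtosisLeThree (X : Ω → ℝ) (μ : Measure Ω) : Prop where
  memLp : MemLp X 4 μ
  integral_eq_zero : ∫ ω, X ω ∂μ = 0
  integral_pow_four_le : ∫ ω, X ω ^ 4 ∂μ ≤ 3 * (∫ ω, X ω ^ 2 ∂μ) ^ 2

namespace KurtosisLeThree

lemma memLp_two [IsFiniteMeasure μ] (hX : KurtosisLeThree X μ) : MemLp X 2 μ :=
  hX.memLp.mono_exponent (by norm_num)

lemma add [IsProbabilityMeasure μ] (hXY : IndepFun X Y μ) (hX : KurtosisLeThree X μ)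
    (hY : KurtosisLeThree Y μ) : KurtosisLeThree (X + Y) μ where
  memLp := hX.memLp.add hY.memLp
  integral_eq_zero := by
    rw [Pi.add_def, integral_add (hX.memLp.integrable (by norm_num))
      (hY.memLp.integrable (by norm_num)), hX.integral_eq_zero, hY.integral_eq_zero, add_zero]
  integral_pow_four_le := by
    simp only [Pi.add_apply]
    rw [hXY.integral_add_sq hX.memLp_two hY.memLp_two hX.integral_eq_zero,
      hXY.integral_add_pow_four hX.memLp hY.memLp hX.integral_eq_zero hY.integral_eq_zero]
    nlinarith [hX.integral_pow_four_le, hY.integral_pow_four_le]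

lemma const_mul [IsFiniteMeasure μ] (hX : KurtosisLeThree X μ) (c : ℝ) :
    KurtosisLeThree (fun ω => c * X ω) μ where
  memLp := hX.memLp.const_mul c
  integral_eq_zero := by rw [integral_const_mul, hX.integral_eq_zero, mul_zero]
  integral_pow_four_le := by
    simp_rw [mul_pow, integral_const_mul]
    nlinarith [hX.integral_pow_four_le, pow_nonneg (sq_nonneg c) 2]

lemma comp_measurePreserving_iff {Ω' : Type*} {mΩ' : MeasurableSpace Ω'} {ν : Measure Ω'}
    {T : Ω' → Ω} (hT : MeasurePreserving T ν μ) (hXm : AEStronglyMeasurable X μ) :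
    KurtosisLeThree (X ∘ T) ν ↔ KurtosisLeThree X μ := by
  have hcomp (k : ℕ) : ∫ ω, (X ∘ T) ω ^ k ∂ν = ∫ ω, X ω ^ k ∂μ :=
    hT.integral_comp_of_aestronglyMeasurable (hXm.pow k)
  have hmemLp : MemLp (X ∘ T) 4 ν ↔ MemLp X 4 μ := by
    rw [← memLp_map_measure_iff (by rwa [hT.map_eq]) hT.aemeasurable, hT.map_eq]
  have hmean : ∫ ω, (X ∘ T) ω ∂ν = ∫ ω, X ω ∂μ := by simpa using hcomp 1
  constructor
  · rintro ⟨hm, h0, h4⟩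
    exact ⟨hmemLp.mp hm, hmean ▸ h0, by rwa [hcomp, hcomp] at h4⟩
  · rintro ⟨hm, h0, h4⟩
    exact ⟨hmemLp.mpr hm, hmean.symm ▸ h0, by rwa [hcomp, hcomp]⟩

section Prod

variable {Ω' : Type*} {mΩ' : MeasurableSpace Ω'} {ν : Measure Ω'} {Z : Ω' → ℝ}

lemma comp_fst [SFinite μ] [IsProbabilityMeasure ν] (hX : KurtosisLeThree X μ) :
    KurtosisLeThree (fun p : Ω × Ω' => X p.1) (μ.prod ν) :=
  (comp_measurePreserving_iff measurePreserving_fst hX.memLp.aestronglyMeasurable).mpr hX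

lemma comp_snd [IsProbabilityMeasure μ] [SFinite ν] (hZ : KurtosisLeThree Z ν) :
    KurtosisLeThree (fun p : Ω × Ω' => Z p.2) (μ.prod ν) :=
  (comp_measurePreserving_iff measurePreserving_snd hZ.memLp.aestronglyMeasurable).mpr hZ

end Prod

lemma finsetSum [IsProbabilityMeasure μ] {ι : Type*} {X : ι → Ω → ℝ} (hind : iIndepFun X μ)
    (hX : ∀ i, KurtosisLeThree (X i) μ) (s : Finset ι) : KurtosisLeThree (∑ i ∈ s, X i) μ := by
  classical
  induction s using Finset.induction_on with
  | empty => exact ⟨MemLp.zero, by simp, by simp⟩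
  | insert i s hi ih =>
    rw [Finset.sum_insert hi, add_comm]
    exact ih.add (hind.indepFun_finsetSum_of_notMem₀
      (fun j => (hX j).memLp.aestronglyMeasurable.aemeasurable) hi) (hX i)

end KurtosisLeThree

lemma ProbabilityTheory.iIndepFun.integral_finsetSum_sq [IsProbabilityMeasure μ] {ι : Type*}
    {X : ι → Ω → ℝ} (hind : iIndepFun X μ) (hX : ∀ i, MemLp (X i) 2 μ)
    (h0 : ∀ i, ∫ ω, X i ω ∂μ = 0) (s : Finset ι) :
    ∫ ω, (∑ i ∈ s, X i ω) ^ 2 ∂μ = ∑ i ∈ s, ∫ ω, X i ω ^ 2 ∂μ := by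
  classical
  induction s using Finset.induction_on with
  | empty => simp
  | insert i s hi ih =>
    have hsum := (hind.indepFun_finsetSum_of_notMem₀
      (fun j => (hX j).aestronglyMeasurable.aemeasurable) hi).symm.integral_add_sq (hX i)
      (memLp_finsetSum' s fun j _ => hX j) (h0 i)
    simp only [Finset.sum_apply] at hsum
    simp_rw [Finset.sum_insert hi]
    rw [hsum, ih]

section Pi

variable {ι E : Type*} [Fintype ι] {mE : MeasurableSpace E} {ρ : Measure E}
  [IsProbabilityMeasure ρ] {f : E → ℝ}

lemma iIndepFun_pi_const_mul (hf : AEMeasurable f ρ) (ν : ι → ℝ) :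
    iIndepFun (fun i (x : ι → E) => ν i * f (x i)) (Measure.pi fun _ => ρ) :=
  iIndepFun_pi fun _ => hf.const_mul _

lemma KurtosisLeThree.const_mul_comp_eval (hf : KurtosisLeThree f ρ) (ν : ι → ℝ) (i : ι) :
    KurtosisLeThree (fun x : ι → E => ν i * f (x i)) (Measure.pi fun _ => ρ) :=
  (comp_measurePreserving_iff (X := fun t => ν i * f t) (measurePreserving_eval _ i)
    (hf.memLp.aestronglyMeasurable.const_mul _)).mpr (hf.const_mul (ν i))

lemma KurtosisLeThree.pi_sum_mul (hf : KurtosisLeThree f ρ) (ν : ι → ℝ) :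
    KurtosisLeThree (fun x : ι → E => ∑ i, ν i * f (x i)) (Measure.pi fun _ => ρ) := by
  simpa [Finset.sum_fn] using KurtosisLeThree.finsetSum
    (iIndepFun_pi_const_mul hf.memLp.aestronglyMeasurable.aemeasurable ν)
    (hf.const_mul_comp_eval ν) Finset.univ

lemma KurtosisLeThree.integral_pi_sum_mul_sq (hf : KurtosisLeThree f ρ) (ν : ι → ℝ) :
    ∫ x : ι → E, (∑ i, ν i * f (x i)) ^ 2 ∂(Measure.pi fun _ => ρ) =
      (∑ i, ν i ^ 2) * ∫ t, f t ^ 2 ∂ρ := by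
  rw [(iIndepFun_pi_const_mul hf.memLp.aestronglyMeasurable.aemeasurable ν).integral_finsetSum_sq
    (fun i => (hf.const_mul_comp_eval ν i).memLp_two)
    (fun i => (hf.const_mul_comp_eval ν i).integral_eq_zero), Finset.sum_mul]
  refine Finset.sum_congr rfl fun i _ => ?_
  simp_rw [mul_pow, integral_const_mul]
  exact congrArg _ <|
    (measurePreserving_eval (fun _ : ι => ρ) i).integral_comp_of_aestronglyMeasurable
      (g := fun t => f t ^ 2) (hf.memLp.aestronglyMeasurable.pow 2)

end Pi

end Moments

noncomputable def unifIcc (α : ℝ) : Measure ℝ :=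
  (ENNReal.ofReal α)⁻¹ • volume.restrict (Set.Icc 0 α)

section Uniform

variable {α : ℝ}

lemma isProbabilityMeasure_unifIcc (hα : 0 < α) : IsProbabilityMeasure (unifIcc α) :=
  ⟨by simp [unifIcc, ENNReal.inv_mul_cancel, hα]⟩

lemma integral_unifIcc (hα : 0 ≤ α) (g : ℝ → ℝ) :
    ∫ t, g t ∂unifIcc α = α⁻¹ * ∫ t in 0..α, g t := by
  rw [unifIcc, integral_smul_measure, ENNReal.toReal_inv, ENNReal.toReal_ofReal hα,
    integral_Icc_eq_integral_Ioc, ← intervalIntegral.integral_of_le hα, smul_eq_mul]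

lemma integral_unifIcc_sub_half_pow (hα : 0 ≤ α) (k : ℕ) :
    ∫ t, (t - α / 2) ^ k ∂unifIcc α =
      α⁻¹ * (((α / 2) ^ (k + 1) - (-(α / 2)) ^ (k + 1)) / (k + 1)) := by
  rw [integral_unifIcc hα, intervalIntegral.integral_comp_sub_right (fun t => t ^ k), integral_pow]
  ring_nf

lemma integral_unifIcc_sub_half_sq (hα : 0 ≤ α) :
    ∫ t, (t - α / 2) ^ 2 ∂unifIcc α = α ^ 2 / 12 := by
  rw [integral_unifIcc_sub_half_pow hα]
  rcases hα.eq_or_lt with rfl | hα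
  · simp
  · field_simp; ring

lemma kurtosisLeThree_unifIcc_sub_half (hα : 0 < α) :
    KurtosisLeThree (fun t => t - α / 2) (unifIcc α) := by
  have := isProbabilityMeasure_unifIcc hα
  refine ⟨memLp_of_bounded (a := -(α / 2)) (b := α / 2) ?_ (by fun_prop) 4, ?_, ?_⟩
  · refine (Measure.ae_smul_measure (ae_restrict_mem measurableSet_Icc) _).mono fun t ht => ?_
    constructor <;> linarith [ht.1, ht.2]
  · simpa using integral_unifIcc_sub_half_pow hα.le 1
  · have h4 : ∫ t, (t - α / 2) ^ 4 ∂unifIcc α = α ^ 4 / 80 := by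
      rw [integral_unifIcc_sub_half_pow hα.le]; field_simp; ring
    rw [h4, integral_unifIcc_sub_half_sq hα.le]
    nlinarith [pow_pos hα 4]

end Uniform

section Cube

variable {m : ℕ} {α : ℝ}

lemma isProbabilityMeasure_unifCube (hα : 0 < α) : IsProbabilityMeasure (unifCube m α) :=
  have := isProbabilityMeasure_unifIcc hα
  inferInstanceAs (IsProbabilityMeasure (Measure.pi fun _ => unifIcc α))

lemma kurtosisLeThree_unifCube (hα : 0 < α) (ν : Fin m → ℝ) :
    KurtosisLeThree (fun x => ∑ i, ν i * (x i - α / 2)) (unifCube m α) :=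
  have := isProbabilityMeasure_unifIcc hα
  (kurtosisLeThree_unifIcc_sub_half hα).pi_sum_mul ν

lemma integral_unifCube_sq (hα : 0 < α) (ν : Fin m → ℝ) :
    ∫ x, (∑ i, ν i * (x i - α / 2)) ^ 2 ∂unifCube m α = α ^ 2 / 12 * ∑ i, ν i ^ 2 := by
  have := isProbabilityMeasure_unifIcc hα
  have h := (kurtosisLeThree_unifIcc_sub_half hα).integral_pi_sum_mul_sq (ι := Fin m) ν
  rwa [integral_unifIcc_sub_half_sq hα.le, mul_comm] at h

lemma measurePreserving_sub_triCube :
    MeasurePreserving (fun p : (Fin m → ℝ) × (Fin m → ℝ) => p.1 - p.2)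
      ((unifCube m α).prod (unifCube m α)) (triCube m α) :=
  ⟨by fun_prop, rfl⟩

lemma measurable_sum_mul_sub (ν : Fin m → ℝ) :
    Measurable fun x : Fin m → ℝ => ∑ i, ν i * (x i - α / 2) := by
  fun_prop

lemma sum_mul_sub_eq (ν : Fin m → ℝ) (x y : Fin m → ℝ) :
    ∑ i, ν i * (x - y) i = ∑ i, ν i * (x i - α / 2) + ∑ i, (-ν) i * (y i - α / 2) := by
  rw [← Finset.sum_add_distrib]
  exact Finset.sum_congr rfl fun i _ => by simp only [Pi.sub_apply, Pi.neg_apply]; ring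

lemma kurtosisLeThree_triCube (hα : 0 < α) (ν : Fin m → ℝ) :
    KurtosisLeThree (fun u => ∑ i, ν i * u i) (triCube m α) := by
  have := isProbabilityMeasure_unifCube (m := m) hα
  rw [← KurtosisLeThree.comp_measurePreserving_iff measurePreserving_sub_triCube
    (Measurable.aestronglyMeasurable (by fun_prop))]
  convert (kurtosisLeThree_unifCube hα ν).comp_fst.add
    (indepFun_prod (measurable_sum_mul_sub ν) (measurable_sum_mul_sub (-ν)))
    (kurtosisLeThree_unifCube hα (-ν)).comp_snd using 1
  funext p
  exact sum_mul_sub_eq ν p.1 p.2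

lemma integral_triCube_sq (hα : 0 < α) (ν : Fin m → ℝ) :
    ∫ u, (∑ i, ν i * u i) ^ 2 ∂triCube m α = α ^ 2 / 6 * ∑ i, ν i ^ 2 := by
  have := isProbabilityMeasure_unifCube (m := m) hα
  have hA := (kurtosisLeThree_unifCube hα ν).comp_fst (ν := unifCube m α)
  have hB := (kurtosisLeThree_unifCube hα (-ν)).comp_snd (μ := unifCube m α)
  rw [← measurePreserving_sub_triCube.integral_comp_of_aestronglyMeasurable
    (g := fun u => (∑ i, ν i * u i) ^ 2) (Measurable.aestronglyMeasurable (by fun_prop))]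
  simp only [sum_mul_sub_eq (α := α) ν]
  rw [(indepFun_prod (measurable_sum_mul_sub ν) (measurable_sum_mul_sub (-ν))).integral_add_sq
    hA.memLp_two hB.memLp_two hA.integral_eq_zero,
    integral_fun_fst (fun x : Fin m → ℝ => (∑ i, ν i * (x i - α / 2)) ^ 2),
    integral_fun_snd (fun x : Fin m → ℝ => (∑ i, (-ν) i * (x i - α / 2)) ^ 2),
    integral_unifCube_sq hα, integral_unifCube_sq hα]
  simp only [probReal_univ, one_smul, Pi.neg_apply, neg_sq]
  ring

lemma isProbabilityMeasure_triCube (hα : 0 < α) : IsProbabilityMeasure (triCube m α) :=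
  have := isProbabilityMeasure_unifCube (m := m) hα
  Measure.isProbabilityMeasure_map (by fun_prop)

end Cube

/-- **Khintchine-type bound.** There is an absolute constant `c* > 0` such
that for every `m ≥ 1`, `α > 0` and `ν ∈ ℝ^m`, if `u ∼ Tri[−α, α]^m` then
`E[|⟨ν, u⟩|] ≥ c* α ‖ν‖₂`. -/
theorem triangular_khintchine :
    ∃ cstar : ℝ, 0 < cstar ∧
      ∀ m : ℕ, 0 < m → ∀ α : ℝ, 0 < α → ∀ ν : Fin m → ℝ,
        cstar * α * Real.sqrt (∑ i, ν i ^ 2)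
          ≤ ∫ u, |∑ i, ν i * u i| ∂(triCube m α) := by
  refine ⟨1 / 12, by norm_num, fun m _ α hα ν => ?_⟩
  have := isProbabilityMeasure_triCube (m := m) hα
  have hK := kurtosisLeThree_triCube hα ν
  have hsq := integral_sq_le_of_integral_pow_four_le hK.memLp three_pos hK.integral_pow_four_le
  rw [integral_triCube_sq hα ν] at hsq
  refine (pow_le_pow_iff_left₀ (by positivity) (integral_nonneg fun _ => abs_nonneg _)
    two_ne_zero).mp ?_
  rw [mul_pow, Real.sq_sqrt (Finset.sum_nonneg fun i _ => sq_nonneg (ν i))]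
  nlinarith
end
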